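/- arXiv:2405.09100 — 2 statements merged into one kernel-verified Lean document; each statement's English description precedes it below -/
import Mathlib

section
/- Let K be a finite simplicial complex on V and let (α, β) be a bistellar pair of type h in K (viewed as n-dimensional). Then the number of n-dimensional faces changes by exactly n − 2h: f_n(bm_α K) + (h + 1) = f_n(K) + (n − h + 1). -/
/-! The `n`-faces of `Λ_α = α * ∂β` are the `h + 1` sets `α ∪ δ` with `δ` a facet of `β`; they
all lie in `K` because `Link_K α = ∂β`. The `n`-faces of `Λ_β = ∂α * β` are the `n - h + 1` sets
`γ ∪ β` with `γ` a facet of `α`; none lies in `K`, since each contains `β ∉ K`. The move deletes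
the former and adds the latter. -/

open Finset

variable {V : Type*} [DecidableEq V]

/-- An abstract simplicial complex: a set of finsets closed under taking subsets. -/
def IsSimplicialComplex (K : Set (Finset V)) : Prop :=
  ∀ S ∈ K, ∀ T ⊆ S, T ∈ K

/-- The boundary complex `∂s` of a finset `s`: all proper subsets of `s`. -/
def bdry (s : Finset V) : Set (Finset V) := {T | T ⊂ s}

/-- The join `α * ∂β = {γ ∪ δ : γ ⊆ α, δ ⊊ β}` (this is `Λ_α`). -/
def joinSB (α β : Finset V) : Set (Finset V) :=
  {S | ∃ γ δ : Finset V, γ ⊆ α ∧ δ ⊂ β ∧ S = γ ∪ δ}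

/-- The join `∂α * β = {γ ∪ δ : γ ⊊ α, δ ⊆ β}` (this is `Λ_β`). -/
def joinBS (α β : Finset V) : Set (Finset V) :=
  {S | ∃ γ δ : Finset V, γ ⊂ α ∧ δ ⊆ β ∧ S = γ ∪ δ}

/-- The link of a face `α` in `K`. -/
def linkOf (K : Set (Finset V)) (α : Finset V) : Set (Finset V) :=
  {γ | γ ∩ α = ∅ ∧ γ ∪ α ∈ K}

/-- `(α, β)` is a bistellar pair of type `h` in `K`, viewed as `n`-dimensional. -/
def IsBistellarPair (K : Set (Finset V)) (n h : ℕ) (α β : Finset V) : Prop :=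
  α ∈ K ∧ α.card = n - h + 1 ∧ β.card = h + 1 ∧ α ∩ β = ∅ ∧ β ∉ K ∧
    linkOf K α = bdry β

/-- The bistellar move `bm_α K = (K \ (α * ∂β)) ∪ (∂α * β)`. -/
def bm (K : Set (Finset V)) (α β : Finset V) : Set (Finset V) :=
  (K \ joinSB α β) ∪ joinBS α β

/-- The `i`-th entry of the f-vector: the number of `i`-dimensional faces of `K`. -/
noncomputable def fvec (K : Set (Finset V)) (i : ℕ) : ℕ := {S ∈ K | S.card = i + 1}.ncard

/-- The set of `(n-1)`-dimensional faces of a complex `Λ` (members with `n` elements). -/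
def faceSet (Λ : Set (Finset V)) (n : ℕ) : Set (Finset V) := {S ∈ Λ | S.card = n}

lemma joinBS_eq_joinSB (α β : Finset V) : joinBS α β = joinSB β α := by
  ext S
  constructor <;> rintro ⟨γ, δ, hγ, hδ, rfl⟩ <;> exact ⟨δ, γ, hδ, hγ, union_comm γ δ⟩

lemma joinSB_finite (α β : Finset V) : (joinSB α β).Finite := by
  refine (α ∪ β).powerset.finite_toSet.subset ?_
  rintro _ ⟨γ, δ, hγ, hδ, rfl⟩
  exact mem_powerset.2 (union_subset_union hγ hδ.subset)

lemma joinSB_subset_of_bdry_subset_linkOf {K : Set (Finset V)} (hK : IsSimplicialComplex K)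
    {α β : Finset V} (hlink : bdry β ⊆ linkOf K α) : joinSB α β ⊆ K := by
  rintro _ ⟨γ, δ, hγ, hδ, rfl⟩
  exact hK _ (hlink hδ).2 _ (union_subset (hγ.trans subset_union_right) subset_union_left)

lemma faceSet_joinSB {α β : Finset V} {q : ℕ} (hβ : β.card = q + 1) (hd : Disjoint α β) :
    faceSet (joinSB α β) (α.card + q) = (α ∪ ·) '' ↑(β.powersetCard q) := by
  ext S
  constructor
  · rintro ⟨⟨γ, δ, hγ, hδ, rfl⟩, hcard⟩
    have hγc := card_le_card hγ
    have hδc := card_lt_card hδ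
    have := card_union_le γ δ
    have hγα : γ = α := eq_of_subset_of_card_le hγ (by omega)
    exact ⟨δ, mem_powersetCard.2 ⟨hδ.subset, by omega⟩, by rw [hγα]⟩
  · rintro ⟨δ, hδ, rfl⟩
    obtain ⟨hδβ, hδc⟩ := mem_powersetCard.1 hδ
    refine ⟨⟨α, δ, subset_rfl, ssubset_of_subset_of_ne hδβ ?_, rfl⟩, ?_⟩
    · rintro rfl
      omega
    · rw [card_union_of_disjoint (hd.mono_right hδβ), hδc]

lemma ncard_faceSet_joinSB {α β : Finset V} {q : ℕ} (hβ : β.card = q + 1)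
    (hd : Disjoint α β) : (faceSet (joinSB α β) (α.card + q)).ncard = β.card := by
  rw [faceSet_joinSB hβ hd, Set.InjOn.ncard_image, Set.ncard_coe_finset, card_powersetCard, hβ,
    Nat.choose_succ_self_right]
  intro δ₁ h₁ δ₂ h₂ he
  have hd₁ := hd.mono_right (mem_powersetCard.1 h₁).1
  have hd₂ := hd.mono_right (mem_powersetCard.1 h₂).1
  rw [← union_sdiff_cancel_left hd₁, ← union_sdiff_cancel_left hd₂]
  exact congrArg (· \ α) he

lemma ncard_faceSet_joinBS {α β : Finset V} {q : ℕ} (hα : α.card = q + 1)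
    (hd : Disjoint α β) : (faceSet (joinBS α β) (β.card + q)).ncard = α.card := by
  rw [joinBS_eq_joinSB, ncard_faceSet_joinSB hα hd.symm]

lemma disjoint_faceSet_joinBS {K : Set (Finset V)} (hK : IsSimplicialComplex K)
    {α β : Finset V} (hβK : β ∉ K) {q : ℕ} (hα : α.card = q + 1) (hd : Disjoint α β) :
    Disjoint (faceSet (joinBS α β) (β.card + q)) K := by
  rw [joinBS_eq_joinSB, faceSet_joinSB hα hd.symm, Set.disjoint_left]
  rintro _ ⟨γ, -, rfl⟩ hS
  exact hβK (hK _ hS _ subset_union_left)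

lemma faceSet_bm (K : Set (Finset V)) (α β : Finset V) (m : ℕ) :
    faceSet (bm K α β) m = faceSet K m \ faceSet (joinSB α β) m ∪ faceSet (joinBS α β) m := by
  ext S
  simp only [faceSet, bm, Set.mem_union, Set.mem_sdiff, Set.mem_ofPred_eq]
  tauto

lemma ncard_sdiff_union_add_ncard {X : Type*} {A B C : Set X} (hA : A.Finite) (hC : C.Finite)
    (hBA : B ⊆ A) (hAC : Disjoint A C) : (A \ B ∪ C).ncard + B.ncard = A.ncard + C.ncard := by
  rw [Set.ncard_union_eq (hAC.mono_left Set.sdiff_subset) hA.sdiff hC, add_right_comm,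
    Set.ncard_sdiff_add_ncard_of_subset hBA hA]

lemma fvec_bm_add {K : Set (Finset V)} (hfin : K.Finite) {α β : Finset V}
    (hsub : joinSB α β ⊆ K) {n : ℕ} (hdisj : Disjoint (faceSet (joinBS α β) (n + 1)) K) :
    fvec (bm K α β) n + (faceSet (joinSB α β) (n + 1)).ncard =
      fvec K n + (faceSet (joinBS α β) (n + 1)).ncard := by
  have hsubJoin : faceSet (joinBS α β) (n + 1) ⊆ joinSB β α := by
    rw [← joinBS_eq_joinSB]
    exact fun S hS ↦ hS.1
  rw [fvec, fvec, ← faceSet, ← faceSet, faceSet_bm]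
  exact ncard_sdiff_union_add_ncard (hfin.subset fun S hS ↦ hS.1)
    ((joinSB_finite β α).subset hsubJoin) (fun S hS ↦ ⟨hsub hS.1, hS.2⟩)
    (Set.disjoint_of_subset_left (fun S hS ↦ hS.1) hdisj.symm)

/-- the number of `n`-dimensional faces changes by exactly `n - 2h`. -/
theorem fvec_top_change (K : Set (Finset V)) (hK : IsSimplicialComplex K)
    (hfin : K.Finite) (n h : ℕ) (hhn : h ≤ n) (α β : Finset V)
    (hpair : IsBistellarPair K n h α β) :
    fvec (bm K α β) n + (h + 1) = fvec K n + (n - h + 1) := by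
  obtain ⟨-, hαc, hβc, hαβ, hβK, hlink⟩ := hpair
  have hd : Disjoint α β := disjoint_iff_inter_eq_empty.2 hαβ
  have hα : α.card + h = n + 1 := by omega
  have hβ : β.card + (n - h) = n + 1 := by omega
  have hremoved : (faceSet (joinSB α β) (n + 1)).ncard = h + 1 := by
    rw [← hα, ncard_faceSet_joinSB hβc hd, hβc]
  have hadded : (faceSet (joinBS α β) (n + 1)).ncard = n - h + 1 := by
    rw [← hβ, ncard_faceSet_joinBS hαc hd, hαc]
  have hdisj : Disjoint (faceSet (joinBS α β) (n + 1)) K := by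
    rw [← hβ]
    exact disjoint_faceSet_joinBS hK hβK hαc hd
  rw [← hremoved, ← hadded]
  exact fvec_bm_add hfin (joinSB_subset_of_bdry_subset_linkOf hK hlink.ge) hdisj
end

section
/- Let h ≥ 1, n = 2h, and let α, β be disjoint finsets of V with α.card = β.card = h + 1. Then for each i with 0 ≤ i < h, the sets of i-dimensional faces coincide: {S ∈ Λ_α : S.card = i + 1} = {S ∈ Λ_β : S.card = i + 1}; while for each i with h ≤ i ≤ n, the sets {S ∈ Λ_α : S.card = i + 1} and {S ∈ Λ_β : S.card = i + 1} are not equal but have the same finite cardinality. -/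
open Finset

variable {V : Type*} [DecidableEq V]

/-- Membership characterization of `joinSB` for disjoint `α β`. -/
lemma mem_joinSB_iff' {α β S : Finset V} (hd : α ∩ β = ∅) :
    S ∈ joinSB α β ↔ S ⊆ α ∪ β ∧ ¬ β ⊆ S := by
  constructor
  · rintro ⟨γ, δ, hγ, hδ, rfl⟩
    refine ⟨union_subset_union hγ hδ.subset, fun hb => ?_⟩
    obtain ⟨x, hxβ, hxδ⟩ := Finset.exists_of_ssubset hδ
    rcases Finset.mem_union.1 (hb hxβ) with hx | hx
    · have : x ∈ α ∩ β := Finset.mem_inter.2 ⟨hγ hx, hxβ⟩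
      simp [hd] at this
    · exact hxδ hx
  · rintro ⟨hsub, hb⟩
    refine ⟨S ∩ α, S ∩ β, Finset.inter_subset_right, ?_, ?_⟩
    · refine lt_of_le_of_ne Finset.inter_subset_right (fun hc => ?_)
      exact hb (hc ▸ Finset.inter_subset_left)
    · rw [← Finset.inter_union_distrib_left, Finset.inter_eq_left.2 hsub]

/-- `Λ_α` and `Λ_β` have the same faces below the middle dimension,
and different (but equinumerous) sets of faces in dimensions `h ≤ i ≤ n = 2h`. -/
theorem join_faces_compare (h n : ℕ) (hh : 1 ≤ h) (hn : n = 2 * h)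
    (α β : Finset V) (hdisj : α ∩ β = ∅)
    (hα : α.card = h + 1) (hβ : β.card = h + 1) :
    (∀ i < h, {S ∈ joinSB α β | S.card = i + 1} = {S ∈ joinBS α β | S.card = i + 1}) ∧
    (∀ i, h ≤ i → i ≤ n →
      {S ∈ joinSB α β | S.card = i + 1} ≠ {S ∈ joinBS α β | S.card = i + 1} ∧
      {S ∈ joinSB α β | S.card = i + 1}.ncard =
        {S ∈ joinBS α β | S.card = i + 1}.ncard) := by
  classical
  have hd' : β ∩ α = ∅ := by rwa [Finset.inter_comm]
  have hA : ∀ i : ℕ, {S ∈ joinSB α β | S.card = i + 1}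
      = {S : Finset V | S ⊆ α ∪ β ∧ ¬ β ⊆ S ∧ S.card = i + 1} := by
    intro i; ext S
    simp only [Set.mem_setOf_eq, mem_joinSB_iff' hdisj]
    tauto
  have hB : ∀ i : ℕ, {S ∈ joinBS α β | S.card = i + 1}
      = {S : Finset V | S ⊆ α ∪ β ∧ ¬ α ⊆ S ∧ S.card = i + 1} := by
    intro i; ext S
    simp only [Set.mem_setOf_eq, joinBS_eq_joinSB, mem_joinSB_iff' hd',
      Finset.union_comm β α]
    tauto
  constructor
  · intro i hi
    rw [hA i, hB i]
    ext S
    simp only [Set.mem_setOf_eq]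
    constructor
    · rintro ⟨h1, h2, h3⟩
      refine ⟨h1, fun hc => ?_, h3⟩
      have := Finset.card_le_card hc
      omega
    · rintro ⟨h1, h2, h3⟩
      refine ⟨h1, fun hc => ?_, h3⟩
      have := Finset.card_le_card hc
      omega
  · intro i hi1 hi2
    have hdis : Disjoint α β := Finset.disjoint_iff_inter_eq_empty.2 hdisj
    constructor
    · -- inequality: witness β ∪ s for s ⊆ α of size i - h
      obtain ⟨s, hsα, hscard⟩ := Finset.exists_subset_card_eq (show i - h ≤ α.card by omega)
      rw [hA i, hB i]
      intro heq
      have hTB : β ∪ s ∈ {S : Finset V | S ⊆ α ∪ β ∧ ¬ α ⊆ S ∧ S.card = i + 1} := by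
        refine ⟨Finset.union_subset Finset.subset_union_right
          (hsα.trans Finset.subset_union_left), ?_, ?_⟩
        · intro hc
          have hαs : α ⊆ s := by
            intro x hx
            rcases Finset.mem_union.1 (hc hx) with hx' | hx'
            · have : x ∈ α ∩ β := Finset.mem_inter.2 ⟨hx, hx'⟩
              simp [hdisj] at this
            · exact hx'
          have := Finset.card_le_card hαs
          omega
        · have hds : Disjoint β s := (hdis.symm.mono_right hsα)
          rw [Finset.card_union_of_disjoint hds, hβ, hscard]
          omega
      rw [← heq] at hTB
      exact hTB.2.1 Finset.subset_union_left
    · -- equal cardinalities via an involution swapping α and β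
      rw [hA i, hB i]
      have σ := Finset.equivOfCardEq (hα.trans hβ.symm)
      have hnotβ : ∀ x ∈ α, x ∉ β := by
        intro x hx hx'
        have : x ∈ α ∩ β := Finset.mem_inter.2 ⟨hx, hx'⟩
        simp [hdisj] at this
      set g : V → V := fun x =>
        if hx : x ∈ α then (σ ⟨x, hx⟩ : V)
        else if hx : x ∈ β then (σ.symm ⟨x, hx⟩ : V) else x with hg
      have hgα : ∀ (x) (hx : x ∈ α), g x = (σ ⟨x, hx⟩ : V) := by
        intro x hx; simp only [hg, dif_pos hx]
      have hgβ : ∀ (x) (hx : x ∈ β), g x = (σ.symm ⟨x, hx⟩ : V) := by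
        intro x hx
        have hxa : x ∉ α := fun hc => hnotβ x hc hx
        simp only [hg, dif_neg hxa, dif_pos hx]
      have hinv : Function.Involutive g := by
        intro x
        by_cases hx : x ∈ α
        · rw [hgα x hx]
          have hb : (σ ⟨x, hx⟩ : V) ∈ β := (σ ⟨x, hx⟩).2
          rw [hgβ _ hb]
          have : (⟨(σ ⟨x, hx⟩ : V), hb⟩ : {y // y ∈ β}) = σ ⟨x, hx⟩ := rfl
          rw [this, Equiv.symm_apply_apply]
        · by_cases hx' : x ∈ β
          · rw [hgβ x hx']
            have ha : (σ.symm ⟨x, hx'⟩ : V) ∈ α := (σ.symm ⟨x, hx'⟩).2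
            rw [hgα _ ha]
            have : (⟨(σ.symm ⟨x, hx'⟩ : V), ha⟩ : {y // y ∈ α}) = σ.symm ⟨x, hx'⟩ := rfl
            rw [this, Equiv.apply_symm_apply]
          · simp only [hg, dif_neg hx, dif_neg hx']
      have hginj : Function.Injective g := hinv.injective
      have hgg : g ∘ g = id := funext hinv
      have himgα : α.image g = β := by
        apply Finset.eq_of_subset_of_card_le
        · intro y hy
          obtain ⟨x, hx, rfl⟩ := Finset.mem_image.1 hy
          rw [hgα x hx]
          exact (σ ⟨x, hx⟩).2
        · rw [Finset.card_image_of_injective _ hginj, hα, hβ]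
      have himgβ : β.image g = α := by
        rw [← himgα, Finset.image_image, hgg, Finset.image_id]
      have himgu : (α ∪ β).image g = α ∪ β := by
        rw [Finset.image_union, himgα, himgβ, Finset.union_comm]
      have himgS : ∀ S : Finset V, (S.image g).image g = S := by
        intro S; rw [Finset.image_image, hgg, Finset.image_id]
      have key : ∀ S : Finset V,
          (S ⊆ α ∪ β ∧ ¬ α ⊆ S ∧ S.card = i + 1) →
          ((S.image g) ⊆ α ∪ β ∧ ¬ β ⊆ (S.image g) ∧ (S.image g).card = i + 1) := by
        rintro S ⟨h1, h2, h3⟩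
        refine ⟨?_, ?_, ?_⟩
        · calc S.image g ⊆ (α ∪ β).image g := Finset.image_subset_image h1
            _ = α ∪ β := himgu
        · intro hc
          apply h2
          have := Finset.image_subset_image (f := g) hc
          rwa [himgβ, himgS S] at this
        · rw [Finset.card_image_of_injective _ hginj, h3]
      have key' : ∀ S : Finset V,
          (S ⊆ α ∪ β ∧ ¬ β ⊆ S ∧ S.card = i + 1) →
          ((S.image g) ⊆ α ∪ β ∧ ¬ α ⊆ (S.image g) ∧ (S.image g).card = i + 1) := by
        rintro S ⟨h1, h2, h3⟩
        refine ⟨?_, ?_, ?_⟩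
        · calc S.image g ⊆ (α ∪ β).image g := Finset.image_subset_image h1
            _ = α ∪ β := himgu
        · intro hc
          apply h2
          have := Finset.image_subset_image (f := g) hc
          rwa [himgα, himgS S] at this
        · rw [Finset.card_image_of_injective _ hginj, h3]
      have hseteq : {S : Finset V | S ⊆ α ∪ β ∧ ¬ β ⊆ S ∧ S.card = i + 1}
          = (fun S : Finset V => S.image g) ''
            {S : Finset V | S ⊆ α ∪ β ∧ ¬ α ⊆ S ∧ S.card = i + 1} := by
        ext T
        constructor
        · intro hT
          exact ⟨T.image g, key' T hT, himgS T⟩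
        · rintro ⟨S, hS, rfl⟩
          exact key S hS
      rw [hseteq]
      exact Set.ncard_image_of_injective _ (Finset.image_injective hginj)
end
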